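/- If h = 0 and β > (Σ_ℓ a_ℓ² ω_ℓ)^{−1}, then the equation K = Σ_ℓ a_ℓ ω_ℓ tanh(β a_ℓ K) has exactly three solutions {−K*, 0, K*} with K* > 0; if instead 0 < β ≤ (Σ_ℓ a_ℓ² ω_ℓ)^{−1}, the only solution is K = 0. -/

import Mathlib

open Real

lemma tanh_hasDerivAt (x : ℝ) : HasDerivAt Real.tanh (1 / Real.cosh x ^ 2) x := by
  have h := (Real.hasDerivAt_sinh x).div (Real.hasDerivAt_cosh x) (Real.cosh_pos x).ne'
  have he : Real.tanh = fun x => Real.sinh x / Real.cosh x := by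
    funext y; exact Real.tanh_eq_sinh_div_cosh y
  have h1 : Real.cosh x * Real.cosh x - Real.sinh x * Real.sinh x = 1 := by
    nlinarith [Real.cosh_sq_sub_sinh_sq x]
  rw [he]
  rwa [h1] at h

lemma tanh_lt_one (x : ℝ) : Real.tanh x < 1 := by
  rw [Real.tanh_eq_sinh_div_cosh, div_lt_one (Real.cosh_pos x)]
  exact Real.sinh_lt_cosh x

lemma tanh_pos {x : ℝ} (hx : 0 < x) : 0 < Real.tanh x := by
  rw [Real.tanh_eq_sinh_div_cosh]
  exact div_pos (by rwa [Real.sinh_pos_iff]) (Real.cosh_pos x)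

lemma continuous_tanh : Continuous Real.tanh := by
  have he : Real.tanh = fun x => Real.sinh x / Real.cosh x := by
    funext y; exact Real.tanh_eq_sinh_div_cosh y
  rw [he]
  exact Real.continuous_sinh.div Real.continuous_cosh fun x => (Real.cosh_pos x).ne'

lemma tanh_lt_self {x : ℝ} (hx : 0 < x) : Real.tanh x < x := by
  have hm : StrictMonoOn (fun y : ℝ => y - Real.tanh y) (Set.Ici 0) := by
    apply strictMonoOn_of_deriv_pos (convex_Ici 0)
      ((continuous_id.sub continuous_tanh).continuousOn)
    intro y hy
    rw [interior_Ici] at hy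
    have hd : HasDerivAt (fun y : ℝ => y - Real.tanh y) (1 - 1 / Real.cosh y ^ 2) y :=
      (hasDerivAt_id y).sub (tanh_hasDerivAt y)
    show 0 < deriv (fun y : ℝ => y - Real.tanh y) y
    rw [hd.deriv]
    have h1 : 1 < Real.cosh y := by
      rw [Real.one_lt_cosh]; exact ne_of_gt hy
    have : 1 / Real.cosh y ^ 2 < 1 := by
      rw [div_lt_one (by positivity)]; nlinarith
    linarith
  have := hm (Set.self_mem_Ici) (Set.mem_Ici.mpr hx.le) hx
  simpa using this

lemma tanh_div_strictAnti : StrictAntiOn (fun x => Real.tanh x / x) (Set.Ioi 0) := by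
  apply strictAntiOn_of_deriv_neg (convex_Ioi 0)
    (continuous_tanh.continuousOn.div continuousOn_id fun x hx => ne_of_gt hx)
  intro x hx
  rw [interior_Ioi] at hx
  have hx0 : (0:ℝ) < x := hx
  have hd : HasDerivAt (fun x => Real.tanh x / x)
      ((1 / Real.cosh x ^ 2 * x - Real.tanh x * 1) / x ^ 2) x :=
    (tanh_hasDerivAt x).div (hasDerivAt_id x) (ne_of_gt hx0)
  show deriv (fun x => Real.tanh x / x) x < 0
  rw [hd.deriv]
  apply div_neg_of_neg_of_pos _ (by positivity)
  have hc := Real.cosh_pos x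
  have hs : x < Real.sinh x * Real.cosh x := by
    nlinarith [Real.self_lt_sinh_iff.mpr hx0, Real.sinh_pos_iff.mpr hx0, Real.one_le_cosh x]
  have ht : Real.tanh x = Real.sinh x / Real.cosh x := Real.tanh_eq_sinh_div_cosh x
  rw [ht, sub_neg, mul_one, div_mul_eq_mul_div, div_lt_div_iff₀ (by positivity) hc]
  nlinarith

lemma core {x y : ℝ} (hx : 0 < x) (hxy : x < y) : x * Real.tanh y < y * Real.tanh x := by
  have := tanh_div_strictAnti (Set.mem_Ioi.mpr hx) (Set.mem_Ioi.mpr (hx.trans hxy)) hxy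
  have hy : 0 < y := hx.trans hxy
  rw [div_lt_div_iff₀ hy hx] at this
  linarith

open Finset

theorem stmt_17 (k : ℕ) (a ω : Fin k → ℝ)
    (ha : ∀ ℓ, 0 < a ℓ)
    (hω : ∀ ℓ, ω ℓ ∈ Set.Ioo (0:ℝ) 1) (hωsum : ∑ ℓ, ω ℓ = 1)
    (β : ℝ) (hβ : 0 < β) :
    ((∑ ℓ, (a ℓ)^2 * ω ℓ)⁻¹ < β →
      ∃ Ks : ℝ, 0 < Ks ∧
        {K : ℝ | K = ∑ ℓ, a ℓ * ω ℓ * Real.tanh (β * (a ℓ * K))} =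
          {-Ks, 0, Ks}) ∧
    (β ≤ (∑ ℓ, (a ℓ)^2 * ω ℓ)⁻¹ →
      {K : ℝ | K = ∑ ℓ, a ℓ * ω ℓ * Real.tanh (β * (a ℓ * K))} = {0}) := by
  set T : ℝ → ℝ := fun K => ∑ ℓ, a ℓ * ω ℓ * Real.tanh (β * (a ℓ * K)) with hTdef
  set S : ℝ := ∑ ℓ, (a ℓ)^2 * ω ℓ with hSdef
  set A : ℝ := ∑ ℓ, a ℓ * ω ℓ with hAdef
  have hmem : ∀ K : ℝ,
      (K ∈ {K : ℝ | K = ∑ ℓ, a ℓ * ω ℓ * Real.tanh (β * (a ℓ * K))}) ↔ K = T K :=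
    fun K => Iff.rfl
  have hne : (Finset.univ : Finset (Fin k)).Nonempty := by
    by_contra h
    rw [Finset.not_nonempty_iff_eq_empty] at h
    rw [h] at hωsum; simp at hωsum
  have hS : 0 < S :=
    Finset.sum_pos (fun ℓ _ => by have := (hω ℓ).1; have := ha ℓ; positivity) hne
  have hA : 0 < A := Finset.sum_pos (fun ℓ _ => mul_pos (ha ℓ) (hω ℓ).1) hne
  have hT0 : T 0 = 0 := by simp [hTdef]
  have hTodd : ∀ K, T (-K) = - T K := by
    intro K
    rw [hTdef]
    simp only
    rw [← Finset.sum_neg_distrib]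
    congr 1; funext ℓ
    rw [show β * (a ℓ * -K) = -(β * (a ℓ * K)) by ring, Real.tanh_neg]; ring
  have hTltA : ∀ K, T K < A := by
    intro K
    apply Finset.sum_lt_sum_of_nonempty hne
    intro ℓ _
    have h1 := _root_.tanh_lt_one (β * (a ℓ * K))
    have h2 := mul_pos (ha ℓ) (hω ℓ).1
    nlinarith
  have huniq : ∀ K1 K2, 0 < K1 → K1 < K2 → T K1 = K1 → T K2 = K2 → False := by
    intro K1 K2 h1 h12 e1 e2
    have hsum : ∑ ℓ, K1 * (a ℓ * ω ℓ * Real.tanh (β * (a ℓ * K2)))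
        < ∑ ℓ, K2 * (a ℓ * ω ℓ * Real.tanh (β * (a ℓ * K1))) := by
      apply Finset.sum_lt_sum_of_nonempty hne
      intro ℓ _
      have haℓ := ha ℓ
      have hω1 := (hω ℓ).1
      have hx : 0 < β * (a ℓ * K1) := by positivity
      have hxy : β * (a ℓ * K1) < β * (a ℓ * K2) := by nlinarith
      have hc := core hx hxy
      have h3 : K1 * (a ℓ * ω ℓ * Real.tanh (β * (a ℓ * K2)))
          = (ω ℓ / β) * (β * (a ℓ * K1) * Real.tanh (β * (a ℓ * K2))) := by
        field_simp
      have h4 : K2 * (a ℓ * ω ℓ * Real.tanh (β * (a ℓ * K1)))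
          = (ω ℓ / β) * (β * (a ℓ * K2) * Real.tanh (β * (a ℓ * K1))) := by
        field_simp
      rw [h3, h4]
      exact mul_lt_mul_of_pos_left hc (by positivity)
    rw [← Finset.mul_sum, ← Finset.mul_sum] at hsum
    have e1' : T K1 = K1 := e1
    have e2' : T K2 = K2 := e2
    rw [hTdef] at e1' e2'
    simp only at e1' e2'
    rw [e1', e2'] at hsum
    nlinarith
  have hTcont : Continuous T := by
    rw [hTdef]
    apply continuous_finset_sum
    intro ℓ _
    exact continuous_const.mul (continuous_tanh.comp (by continuity))
  constructor
  · intro hβ1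
    have hβS : 1 < β * S := by
      have h1 : S⁻¹ * S = 1 := inv_mul_cancel₀ hS.ne'
      nlinarith
    -- derivative of T at 0
    have hterm : ∀ ℓ : Fin k,
        HasDerivAt (fun K => a ℓ * ω ℓ * Real.tanh (β * (a ℓ * K))) (β * ((a ℓ)^2 * ω ℓ)) 0 := by
      intro ℓ
      have hinner : HasDerivAt (fun K : ℝ => β * (a ℓ * K)) (β * (a ℓ * 1)) 0 :=
        ((hasDerivAt_id 0).const_mul (a ℓ)).const_mul β
      have houter := ((tanh_hasDerivAt (β * (a ℓ * 0))).comp 0 hinner).const_mul (a ℓ * ω ℓ)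
      refine houter.congr_deriv ?_
      simp [Real.cosh_zero]
      ring
    have hT' : HasDerivAt T (β * S) 0 := by
      have h := HasDerivAt.fun_sum (fun ℓ (_ : ℓ ∈ Finset.univ) => hterm ℓ)
      rw [hTdef, hSdef]
      refine h.congr_deriv ?_
      rw [← Finset.mul_sum]
    have hf : HasDerivAt (fun K => T K - K) (β * S - 1) 0 :=
      hT'.sub (hasDerivAt_id 0)
    have hslope := hasDerivAt_iff_tendsto_slope.mp hf
    have hev1 : ∀ᶠ K in nhdsWithin (0:ℝ) {0}ᶜ, 0 < slope (fun K => T K - K) 0 K :=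
      hslope.eventually (eventually_gt_nhds (by linarith))
    have hev2 : ∀ᶠ K in nhdsWithin (0:ℝ) (Set.Ioi 0), 0 < slope (fun K => T K - K) 0 K :=
      hev1.filter_mono (nhdsWithin_mono 0 (fun x hx => ne_of_gt hx))
    have hev3 : ∀ᶠ K in nhdsWithin (0:ℝ) (Set.Ioi 0),
        0 < slope (fun K => T K - K) 0 K ∧ 0 < K :=
      hev2.and (eventually_mem_nhdsWithin.mono (fun x hx => hx))
    obtain ⟨K0, hsl, hK0⟩ := hev3.exists
    have hfK0 : 0 < T K0 - K0 := by
      rw [slope_def_field] at hsl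
      simp only [hT0, sub_zero, zero_sub, sub_neg_eq_add] at hsl
      have := (div_pos_iff.mp hsl)
      rcases this with ⟨h1, _⟩ | ⟨_, h2⟩
      · simpa using h1
      · linarith
    have hK0A : K0 < A := by have := hTltA K0; linarith
    have hIVT := intermediate_value_Icc' (le_of_lt hK0A)
      ((hTcont.sub continuous_id).continuousOn)
    have h0mem : (0:ℝ) ∈ Set.Icc (T A - A) (T K0 - K0) := by
      constructor
      · have := hTltA A; linarith
      · linarith
    obtain ⟨Ks, hKsmem, hfKs⟩ := hIVT h0mem
    have hKs0 : 0 < Ks := lt_of_lt_of_le hK0 hKsmem.1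
    have hTKs : T Ks = Ks := by
      have : T Ks - Ks = 0 := hfKs
      linarith
    refine ⟨Ks, hKs0, ?_⟩
    have hpos_uniq : ∀ K, 0 < K → T K = K → K = Ks := by
      intro K hK hTK
      rcases lt_trichotomy K Ks with h | h | h
      · exact absurd (huniq K Ks hK h hTK hTKs) not_false
      · exact h
      · exact absurd (huniq Ks K hKs0 h hTKs hTK) not_false
    ext K
    rw [hmem K]
    simp only [Set.mem_insert_iff, Set.mem_singleton_iff]
    constructor
    · intro hK
      rcases lt_trichotomy K 0 with h | h | h
      · left
        have hnK : T (-K) = -K := by rw [hTodd, ← hK]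
        have := hpos_uniq (-K) (by linarith) hnK
        linarith
      · right; left; exact h
      · right; right; exact hpos_uniq K h hK.symm
    · intro hK
      rcases hK with h | h | h
      · subst h
        rw [hTodd, hTKs]
      · subst h; exact hT0.symm
      · subst h; exact hTKs.symm
  · intro hβ1
    have hβS : β * S ≤ 1 := by
      have h1 : S⁻¹ * S = 1 := inv_mul_cancel₀ hS.ne'
      nlinarith
    have hlt : ∀ K, 0 < K → T K < K := by
      intro K hK
      have hstep : T K < ∑ ℓ, β * (a ℓ ^ 2 * ω ℓ) * K := by
        apply Finset.sum_lt_sum_of_nonempty hne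
        intro ℓ _
        have haℓ := ha ℓ
        have hω1 := (hω ℓ).1
        have h1 := tanh_lt_self (show 0 < β * (a ℓ * K) by positivity)
        nlinarith [mul_lt_mul_of_pos_left h1 (mul_pos haℓ hω1)]
      have heq : ∑ ℓ, β * (a ℓ ^ 2 * ω ℓ) * K = β * S * K := by
        rw [hSdef, Finset.mul_sum, Finset.sum_mul]
      rw [heq] at hstep
      nlinarith
    ext K
    rw [hmem K]
    simp only [Set.mem_singleton_iff]
    constructor
    · intro hK
      by_contra h0
      rcases lt_or_gt_of_ne h0 with h | h
      · have h1 := hlt (-K) (by linarith)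
        rw [hTodd] at h1
        linarith
      · have h1 := hlt K h
        linarith
    · intro h; subst h; exact hT0.symm
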